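/- Let l ≥ 1 be real, m ∈ ℝ, and let W ∈ C^∞([−1,1] × ℝ) satisfy |∂_x^k W(y,x)| ≤ C_k ⟨x⟩^{m−k} for all k ≥ 0, uniformly in y ∈ [−1,1]. Define I(M) := ∫_{−1}^{1} W(y, M y) / √(1 − |y|^{2l}) dy. Then I ∈ C^∞(ℝ) and for every integer k ≥ 0 there is a constant C′_k (depending only on the constants C_j, l, m, k) such that |∂_M^k I(M)| ≤ C′_k ⟨M⟩^{[m]−k} for all M ∈ ℝ. -/

import Mathlib

open Real MeasureTheory intervalIntegral

noncomputable section

/-- Japanese bracket `⟨x⟩ = √(1+x²)`. -/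
def jap (x : ℝ) : ℝ := Real.sqrt (1 + x ^ 2)

/-- `I(M) = ∫_{-1}^1 W(y,My)/√(1-|y|^{2l}) dy`. -/
def Ifun (l : ℝ) (W : ℝ → ℝ → ℝ) (M : ℝ) : ℝ :=
  ∫ y in (-1:ℝ)..1, W y (M * y) / Real.sqrt (1 - |y| ^ (2 * l))

namespace Stmt13

abbrev sS : Set (ℝ × ℝ) := Set.Icc (-1:ℝ) 1 ×ˢ (Set.univ : Set ℝ)

lemma sS_ud : UniqueDiffOn ℝ sS :=
  (uniqueDiffOn_Icc (by norm_num : (-1:ℝ) < 1)).prod uniqueDiffOn_univ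

lemma slice_smooth {W : ℝ → ℝ → ℝ}
    (h : ContDiffOn ℝ (⊤ : ℕ∞) (fun q : ℝ × ℝ => W q.1 q.2) sS)
    {y : ℝ} (hy : y ∈ Set.Icc (-1:ℝ) 1) : ContDiff ℝ (⊤ : ℕ∞) (W y) := by
  rw [← contDiffOn_univ]
  exact h.comp ((contDiff_const.prodMk contDiff_id).contDiffOn)
    (fun x _ => ⟨hy, Set.mem_univ _⟩)

lemma slice_deriv {G : ℝ × ℝ → ℝ} (hG : ContDiffOn ℝ (⊤ : ℕ∞) G sS)
    {y x : ℝ} (hy : y ∈ Set.Icc (-1:ℝ) 1) :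
    deriv (fun x' => G (y, x')) x = fderivWithin ℝ G sS (y, x) ((0:ℝ), (1:ℝ)) := by
  have hmem : (y, x) ∈ sS := ⟨hy, Set.mem_univ _⟩
  have hdiff : DifferentiableWithinAt ℝ G sS (y, x) :=
    (hG.differentiableOn (by simp)) _ hmem
  have hL : HasFDerivWithinAt G (fderivWithin ℝ G sS (y, x)) sS (y, x) :=
    hdiff.hasFDerivWithinAt
  have hι : HasDerivAt (fun x' : ℝ => ((y, x') : ℝ × ℝ)) ((0:ℝ), (1:ℝ)) x :=
    (hasDerivAt_const x y).prodMk (hasDerivAt_id x)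
  have hcomp : HasDerivWithinAt (fun x' => G (y, x'))
      (fderivWithin ℝ G sS (y, x) ((0:ℝ),(1:ℝ))) Set.univ x := by
    have := hL.comp_hasDerivWithinAt x (hι.hasDerivWithinAt (s := Set.univ))
      (fun x' _ => ⟨hy, Set.mem_univ _⟩)
    simpa [Function.comp_def] using this
  exact ((hasDerivWithinAt_univ).1 hcomp).deriv

lemma Dk_smooth {W : ℝ → ℝ → ℝ}
    (h : ContDiffOn ℝ (⊤ : ℕ∞) (fun q : ℝ × ℝ => W q.1 q.2) sS) (k : ℕ) :
    ContDiffOn ℝ (⊤ : ℕ∞) (fun q : ℝ × ℝ => iteratedDeriv k (W q.1) q.2) sS := by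
  induction k with
  | zero => simpa [iteratedDeriv_zero] using h
  | succ k ih =>
    have hfd : ContDiffOn ℝ (⊤ : ℕ∞)
        (fun q : ℝ × ℝ => fderivWithin ℝ (fun q : ℝ × ℝ => iteratedDeriv k (W q.1) q.2) sS q
          ((0:ℝ),(1:ℝ))) sS :=
      (ih.fderivWithin sS_ud (by norm_num)).clm_apply contDiffOn_const
    refine hfd.congr ?_
    intro q hq
    have : iteratedDeriv (k+1) (W q.1) q.2
        = deriv (fun x' => iteratedDeriv k (W q.1) x') q.2 := by
      rw [iteratedDeriv_succ]
    rw [this, ← slice_deriv ih hq.1]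

/-! ### jap facts -/

lemma one_le_jap (x : ℝ) : 1 ≤ jap x := by
  have h := Real.sqrt_le_sqrt (show (1:ℝ) ≤ 1 + x ^ 2 by nlinarith [sq_nonneg x])
  simpa [jap] using h

lemma jap_pos (x : ℝ) : 0 < jap x := lt_of_lt_of_le one_pos (one_le_jap x)

lemma jap_mul_le {M y : ℝ} (hy : |y| ≤ 1) : jap (M * y) ≤ jap M := by
  have hy2 : y ^ 2 ≤ 1 := by nlinarith [abs_nonneg y, sq_abs y]
  exact Real.sqrt_le_sqrt (by nlinarith [sq_nonneg M])

lemma jap_le_one_add (M : ℝ) : jap M ≤ 1 + |M| := by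
  have h : jap M ≤ Real.sqrt ((1 + |M|) ^ 2) :=
    Real.sqrt_le_sqrt (by nlinarith [abs_nonneg M, sq_abs M])
  rwa [Real.sqrt_sq (by positivity)] at h

lemma jap_frac {M y : ℝ} (hy : |y| ≤ 1) : |y| * jap M ≤ Real.sqrt 2 * jap (M * y) := by
  have hy2 : y ^ 2 ≤ 1 := by nlinarith [abs_nonneg y, sq_abs y]
  have h1 : |y| * jap M = Real.sqrt (y ^ 2 * (1 + M ^ 2)) := by
    rw [jap, ← Real.sqrt_sq_eq_abs, ← Real.sqrt_mul (sq_nonneg y)]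
  have h2 : Real.sqrt 2 * jap (M * y) = Real.sqrt (2 * (1 + (M * y) ^ 2)) := by
    rw [jap, ← Real.sqrt_mul (by norm_num : (0:ℝ) ≤ 2)]
  rw [h1, h2]
  exact Real.sqrt_le_sqrt (by nlinarith [sq_nonneg (M * y), sq_nonneg M])

lemma rpow_le_max {t T r : ℝ} (ht : 1 ≤ t) (hT : t ≤ T) :
    t ^ r ≤ T ^ (max r 0) := by
  rcases le_or_gt 0 r with hr | hr
  · rw [max_eq_left hr]
    exact Real.rpow_le_rpow (by linarith) hT hr
  · rw [max_eq_right (le_of_lt hr), Real.rpow_zero]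
    exact Real.rpow_le_one_of_one_le_of_nonpos ht (le_of_lt hr)

lemma rpow_le_max' {t T r : ℝ} (ht : 1 ≤ t) (hT : t ≤ T) :
    t ^ r ≤ max (T ^ r) 1 := by
  rcases le_or_gt 0 r with hr | hr
  · exact le_max_of_le_left (Real.rpow_le_rpow (by linarith) hT hr)
  · exact le_max_of_le_right (Real.rpow_le_one_of_one_le_of_nonpos ht (le_of_lt hr))

lemma ptwise (m : ℝ) (k : ℕ) (C D M y : ℝ) (hy : |y| ≤ 1)
    (hD : |D| ≤ C * jap (M * y) ^ (m - (k:ℝ))) (hC : 0 ≤ C) :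
    |y ^ k * D| ≤ (C * Real.sqrt 2 ^ k) * jap M ^ (max m 0 - (k:ℝ)) := by
  set t := jap (M * y) with hts
  set J := jap M with hJs
  have ht1 : 1 ≤ t := one_le_jap _
  have hJ1 : 1 ≤ J := one_le_jap _
  have ht0 : 0 < t := by linarith
  have hJ0 : 0 < J := by linarith
  have htJ : t ≤ J := jap_mul_le hy
  have key : |y| ^ k * t ^ (m - (k:ℝ)) ≤ Real.sqrt 2 ^ k * J ^ (max m 0 - (k:ℝ)) := by
    have e1 : t ^ (m - (k:ℝ)) = t ^ m * (t ^ k)⁻¹ := by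
      rw [sub_eq_add_neg, Real.rpow_add ht0, Real.rpow_neg (le_of_lt ht0),
        Real.rpow_natCast]
    have e2 : J ^ (max m 0 - (k:ℝ)) = J ^ (max m 0) * (J ^ k)⁻¹ := by
      rw [sub_eq_add_neg, Real.rpow_add hJ0, Real.rpow_neg (le_of_lt hJ0),
        Real.rpow_natCast]
    rw [e1, e2]
    have hfrac : |y| / t ≤ Real.sqrt 2 / J := by
      rw [div_le_div_iff₀ ht0 hJ0]
      exact jap_frac hy
    have hfk : (|y| / t) ^ k ≤ (Real.sqrt 2 / J) ^ k :=
      pow_le_pow_left₀ (by positivity) hfrac k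
    have htm : t ^ m ≤ J ^ (max m 0) := rpow_le_max ht1 htJ
    calc |y| ^ k * (t ^ m * (t ^ k)⁻¹) = t ^ m * (|y| / t) ^ k := by
          rw [div_pow]; ring
      _ ≤ J ^ (max m 0) * (Real.sqrt 2 / J) ^ k := by
          apply mul_le_mul htm hfk (by positivity)
          positivity
      _ = Real.sqrt 2 ^ k * (J ^ (max m 0) * (J ^ k)⁻¹) := by
          rw [div_pow]; ring
  calc |y ^ k * D| = |y| ^ k * |D| := by rw [abs_mul, abs_pow]
    _ ≤ |y| ^ k * (C * t ^ (m - (k:ℝ))) :=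
        mul_le_mul_of_nonneg_left hD (by positivity)
    _ = C * (|y| ^ k * t ^ (m - (k:ℝ))) := by ring
    _ ≤ C * (Real.sqrt 2 ^ k * J ^ (max m 0 - (k:ℝ))) :=
        mul_le_mul_of_nonneg_left key hC
    _ = (C * Real.sqrt 2 ^ k) * J ^ (max m 0 - (k:ℝ)) := by ring

/-! ### weights -/

def wt (l : ℝ) (y : ℝ) : ℝ := (Real.sqrt (1 - |y| ^ (2 * l)))⁻¹

def wmaj (y : ℝ) : ℝ := (Real.sqrt (1 - |y|))⁻¹

lemma wt_nonneg (l y : ℝ) : 0 ≤ wt l y := by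
  unfold wt; positivity

lemma wmaj_nonneg (y : ℝ) : 0 ≤ wmaj y := by
  unfold wmaj; positivity

lemma wt_le_wmaj {l : ℝ} (hl : 1 ≤ l) {y : ℝ} (hy : |y| ≤ 1) : wt l y ≤ wmaj y := by
  have habs : (0:ℝ) ≤ |y| := abs_nonneg y
  have hexp : |y| ^ (2 * l) ≤ |y| := by
    rcases eq_or_lt_of_le habs with h0 | h0
    · rw [← h0, Real.zero_rpow (by positivity)]
    · calc |y| ^ (2 * l) ≤ |y| ^ (1:ℝ) :=
            Real.rpow_le_rpow_of_exponent_ge h0 hy (by linarith)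
        _ = |y| := Real.rpow_one _
  rcases eq_or_lt_of_le hy with h1 | h1
  · have h2 : |y| ^ (2*l) = 1 := by rw [h1, Real.one_rpow]
    simp [wt, wmaj, h2, h1]
  · have hpos : 0 < Real.sqrt (1 - |y|) := Real.sqrt_pos.2 (by linarith)
    have hle : Real.sqrt (1 - |y|) ≤ Real.sqrt (1 - |y| ^ (2*l)) :=
      Real.sqrt_le_sqrt (by linarith)
    exact inv_anti₀ hpos hle

lemma wmaj_eq {y : ℝ} (hy : |y| ≤ 1) : wmaj y = (1 - |y|) ^ (-(1:ℝ)/2 : ℝ) := by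
  have h0 : (0:ℝ) ≤ 1 - |y| := by linarith
  rw [wmaj, Real.sqrt_eq_rpow, ← Real.rpow_neg h0]
  norm_num

lemma wmaj_intble : IntervalIntegrable wmaj volume (-1) 1 := by
  have h1 : IntervalIntegrable (fun x : ℝ => x ^ (-(1:ℝ)/2)) volume 0 1 :=
    intervalIntegrable_rpow' (by norm_num)
  have hpos : IntervalIntegrable wmaj volume 0 1 := by
    have h2 := (h1.comp_sub_left 1).symm
    norm_num at h2
    refine h2.congr ?_
    intro y hy
    rw [Set.uIoc_of_le (by norm_num : (0:ℝ) ≤ 1)] at hy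
    have hy0 : 0 ≤ y := le_of_lt hy.1
    have habs : |y| = y := abs_of_nonneg hy0
    rw [wmaj_eq (by rw [habs]; exact hy.2), habs]; norm_num
  have hneg : IntervalIntegrable wmaj volume (-1) 0 := by
    have h2 := h1.comp_add_left 1
    norm_num at h2
    refine h2.congr ?_
    intro y hy
    rw [Set.uIoc_of_le (by norm_num : (-1:ℝ) ≤ 0)] at hy
    have habs : |y| = -y := abs_of_nonpos hy.2
    rw [wmaj_eq (by rw [habs]; linarith [hy.1]), habs]
    ring_nf
  exact hneg.trans hpos

lemma wt_measurable {l : ℝ} (hl : 1 ≤ l) : Measurable (wt l) := by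
  have h1 : Continuous fun y : ℝ => Real.sqrt (1 - |y| ^ (2*l)) := by
    apply Real.continuous_sqrt.comp
    exact continuous_const.sub ((Real.continuous_rpow_const (by linarith)).comp
      continuous_abs)
  exact h1.measurable.inv


/-! ### the integrand -/

def Jint (l : ℝ) (W : ℝ → ℝ → ℝ) (k : ℕ) (M y : ℝ) : ℝ :=
  y ^ k * iteratedDeriv k (W y) (M * y) * wt l y

variable {l : ℝ} {W : ℝ → ℝ → ℝ} {m : ℝ}

lemma uIoc_sub : Set.uIoc (-1:ℝ) 1 ⊆ Set.Icc (-1:ℝ) 1 := by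
  rw [Set.uIoc_of_le (by norm_num : (-1:ℝ) ≤ 1)]
  exact Set.Ioc_subset_Icc_self

lemma Jint_meas (hl : 1 ≤ l)
    (hWsm : ContDiffOn ℝ (⊤ : ℕ∞) (fun q : ℝ × ℝ => W q.1 q.2) sS)
    (k : ℕ) (M : ℝ) :
    AEStronglyMeasurable (Jint l W k M)
      (volume.restrict (Set.uIoc (-1:ℝ) 1)) := by
  have hg : ContinuousOn (fun y : ℝ => ((y, M * y) : ℝ × ℝ)) (Set.Icc (-1:ℝ) 1) :=
    (continuous_id.prodMk (continuous_const.mul continuous_id)).continuousOn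
  have hcomp : ContinuousOn (fun y : ℝ => iteratedDeriv k (W y) (M * y))
      (Set.Icc (-1:ℝ) 1) :=
    ((Dk_smooth hWsm k).continuousOn).comp hg (fun y hy => ⟨hy, Set.mem_univ _⟩)
  have hN : ContinuousOn (fun y : ℝ => y ^ k * iteratedDeriv k (W y) (M * y))
      (Set.Icc (-1:ℝ) 1) := (continuousOn_id.pow k).mul hcomp
  have hN' : AEStronglyMeasurable (fun y : ℝ => y ^ k * iteratedDeriv k (W y) (M * y))
      (volume.restrict (Set.uIoc (-1:ℝ) 1)) :=
    (hN.aestronglyMeasurable measurableSet_Icc).mono_measure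
      (Measure.restrict_mono uIoc_sub le_rfl)
  exact hN'.mul ((wt_measurable hl).aestronglyMeasurable)

lemma Jint_bound (hl : 1 ≤ l) (k : ℕ) {C : ℝ} (hC : 0 ≤ C)
    (hb : ∀ y ∈ Set.Icc (-1:ℝ) 1, ∀ x : ℝ,
      |iteratedDeriv k (W y) x| ≤ C * jap x ^ (m - (k:ℝ)))
    {y : ℝ} (hy : y ∈ Set.Icc (-1:ℝ) 1) (M : ℝ) :
    |Jint l W k M y| ≤ ((C * Real.sqrt 2 ^ k) * jap M ^ (max m 0 - (k:ℝ))) * wmaj y := by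
  have hy' : |y| ≤ 1 := abs_le.2 ⟨hy.1, hy.2⟩
  have h1 := ptwise m k C _ M y hy' (hb y hy (M * y)) hC
  have hK : 0 ≤ (C * Real.sqrt 2 ^ k) * jap M ^ (max m 0 - (k:ℝ)) := by
    have := Real.rpow_nonneg (le_of_lt (jap_pos M)) (max m 0 - (k:ℝ))
    positivity
  calc |Jint l W k M y| = |y ^ k * iteratedDeriv k (W y) (M * y)| * wt l y := by
        rw [Jint, abs_mul, abs_of_nonneg (wt_nonneg l y)]
    _ ≤ ((C * Real.sqrt 2 ^ k) * jap M ^ (max m 0 - (k:ℝ))) * wmaj y :=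
        mul_le_mul h1 (wt_le_wmaj hl hy') (wt_nonneg l y) hK

lemma Jint_intble (hl : 1 ≤ l)
    (hWsm : ContDiffOn ℝ (⊤ : ℕ∞) (fun q : ℝ × ℝ => W q.1 q.2) sS)
    (k : ℕ) {C : ℝ} (hC : 0 ≤ C)
    (hb : ∀ y ∈ Set.Icc (-1:ℝ) 1, ∀ x : ℝ,
      |iteratedDeriv k (W y) x| ≤ C * jap x ^ (m - (k:ℝ)))
    (M : ℝ) : IntervalIntegrable (Jint l W k M) volume (-1) 1 := by
  refine (wmaj_intble.const_mul
    ((C * Real.sqrt 2 ^ k) * jap M ^ (max m 0 - (k:ℝ)))).mono_fun'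
    (Jint_meas hl hWsm k M) ?_
  refine (ae_restrict_iff' measurableSet_uIoc).2 (ae_of_all _ fun y hy => ?_)
  simpa [Real.norm_eq_abs] using Jint_bound hl k hC hb (uIoc_sub hy) M

lemma Jint_hasDeriv
    (hWsm : ContDiffOn ℝ (⊤ : ℕ∞) (fun q : ℝ × ℝ => W q.1 q.2) sS)
    {y : ℝ} (hy : y ∈ Set.Icc (-1:ℝ) 1) (k : ℕ) (M : ℝ) :
    HasDerivAt (fun M' => Jint l W k M' y) (Jint l W (k+1) M y) M := by
  have hsl : ContDiff ℝ (⊤ : ℕ∞) (W y) := slice_smooth hWsm hy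
  have hdiff : DifferentiableAt ℝ (iteratedDeriv k (W y)) (M * y) :=
    (hsl.differentiable_iteratedDeriv k
      (by exact_mod_cast lt_of_le_of_lt (le_refl _) (WithTop.coe_lt_top _))).differentiableAt
  have h1 : HasDerivAt (iteratedDeriv k (W y))
      (iteratedDeriv (k+1) (W y) (M * y)) (M * y) := by
    rw [iteratedDeriv_succ]
    exact hdiff.hasDerivAt
  have h2 : HasDerivAt (fun M' : ℝ => M' * y) y M := hasDerivAt_mul_const y
  have h3 := h1.comp M h2
  have h4 := (h3.const_mul (y ^ k : ℝ)).mul_const (wt l y)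
  unfold Jint
  refine h4.congr_deriv ?_
  ring

lemma g_hasDeriv (hl : 1 ≤ l)
    (hWsm : ContDiffOn ℝ (⊤ : ℕ∞) (fun q : ℝ × ℝ => W q.1 q.2) sS)
    (hWb : ∀ k : ℕ, ∃ C : ℝ, 0 ≤ C ∧ ∀ y ∈ Set.Icc (-1:ℝ) 1, ∀ x : ℝ,
      |iteratedDeriv k (W y) x| ≤ C * jap x ^ (m - (k:ℝ)))
    (k : ℕ) (M₀ : ℝ) :
    HasDerivAt (fun M => ∫ y in (-1:ℝ)..1, Jint l W k M y)
      (∫ y in (-1:ℝ)..1, Jint l W (k+1) M₀ y) M₀ := by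
  obtain ⟨C0, hC0, hb0⟩ := hWb k
  obtain ⟨C1, hC1, hb1⟩ := hWb (k+1)
  set T : ℝ := 2 + |M₀| with hT
  set K : ℝ := (C1 * Real.sqrt 2 ^ (k+1)) * max (T ^ (max m 0 - ((k+1:ℕ):ℝ))) 1 with hK
  have H := intervalIntegral.hasDerivAt_integral_of_dominated_loc_of_deriv_le
    (F := fun M y => Jint l W k M y) (F' := fun M y => Jint l W (k+1) M y)
    (bound := fun y => K * wmaj y) (x₀ := M₀) (a := -1) (b := 1) (μ := volume)
    (Metric.ball_mem_nhds M₀ one_pos)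
    (Filter.Eventually.of_forall fun M => Jint_meas hl hWsm k M)
    (Jint_intble hl hWsm k hC0 hb0 M₀)
    (Jint_meas hl hWsm (k+1) M₀)
    ?_ (wmaj_intble.const_mul K)
    (ae_of_all _ fun y hy M _ => Jint_hasDeriv hWsm (uIoc_sub hy) k M)
  · exact H.2
  · refine ae_of_all _ fun y hy M hM => ?_
    have hyIcc := uIoc_sub hy
    have h1 := Jint_bound hl (k+1) hC1 hb1 hyIcc M
    have hMT : jap M ≤ T := by
      have h2 : |M| ≤ |M₀| + 1 := by
        have h3 : |M - M₀| < 1 := by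
          simpa [Real.dist_eq] using Metric.mem_ball.1 hM
        calc |M| = |M₀ + (M - M₀)| := by ring_nf
          _ ≤ |M₀| + |M - M₀| := abs_add_le _ _
          _ ≤ |M₀| + 1 := by linarith
      calc jap M ≤ 1 + |M| := jap_le_one_add M
        _ ≤ T := by rw [hT]; linarith
    have h4 : jap M ^ (max m 0 - ((k+1:ℕ):ℝ)) ≤ max (T ^ (max m 0 - ((k+1:ℕ):ℝ))) 1 :=
      rpow_le_max' (one_le_jap M) hMT
    have h5 : (C1 * Real.sqrt 2 ^ (k+1)) * jap M ^ (max m 0 - ((k+1:ℕ):ℝ)) ≤ K := by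
      rw [hK]
      exact mul_le_mul_of_nonneg_left h4 (by positivity)
    calc ‖Jint l W (k+1) M y‖
        = |Jint l W (k+1) M y| := rfl
      _ ≤ ((C1 * Real.sqrt 2 ^ (k+1)) * jap M ^ (max m 0 - ((k+1:ℕ):ℝ))) * wmaj y := h1
      _ ≤ K * wmaj y := mul_le_mul_of_nonneg_right h5 (wmaj_nonneg y)

end Stmt13

/-- if `W ∈ C^∞([-1,1]×ℝ)` with `|∂_x^k W(y,x)| ≤ C_k ⟨x⟩^{m-k}` uniformly
in `y ∈ [-1,1]`, then `I ∈ C^∞(ℝ)` and `|∂_M^k I(M)| ≤ C'_k ⟨M⟩^{[m]-k}`. -/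
theorem stmt13 (l : ℝ) (hl : 1 ≤ l) (m : ℝ) (W : ℝ → ℝ → ℝ)
    (hWsm : ContDiffOn ℝ (⊤ : ℕ∞) (fun q : ℝ × ℝ => W q.1 q.2)
      (Set.Icc (-1:ℝ) 1 ×ˢ Set.univ))
    (hWb : ∀ k : ℕ, ∃ C : ℝ, ∀ y ∈ Set.Icc (-1:ℝ) 1, ∀ x : ℝ,
      |iteratedDeriv k (W y) x| ≤ C * jap x ^ (m - (k : ℝ))) :
    ContDiff ℝ (⊤ : ℕ∞) (Ifun l W) ∧
    ∀ k : ℕ, ∃ C' : ℝ, ∀ M : ℝ,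
      |iteratedDeriv k (Ifun l W) M| ≤ C' * jap M ^ (max m 0 - (k : ℝ)) := by
  classical
  open Stmt13 in
  -- upgrade the bound constants to be nonnegative
  have hWb' : ∀ k : ℕ, ∃ C : ℝ, 0 ≤ C ∧ ∀ y ∈ Set.Icc (-1:ℝ) 1, ∀ x : ℝ,
      |iteratedDeriv k (W y) x| ≤ C * jap x ^ (m - (k : ℝ)) := by
    intro k
    obtain ⟨C, hC⟩ := hWb k
    refine ⟨max C 0, le_max_right _ _, fun y hy x => ?_⟩
    exact le_trans (hC y hy x)
      (mul_le_mul_of_nonneg_right (le_max_left _ _)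
        (Real.rpow_nonneg (le_of_lt (jap_pos x)) _))
  set g : ℕ → ℝ → ℝ := fun k M => ∫ y in (-1:ℝ)..1, Jint l W k M y with hg
  have hIg : Ifun l W = g 0 := by
    funext M
    rw [hg, Ifun]
    refine intervalIntegral.integral_congr fun y _ => ?_
    simp [Jint, wt, iteratedDeriv_zero, div_eq_mul_inv]
  have hDeriv : ∀ k M₀, HasDerivAt (g k) (g (k+1) M₀) M₀ :=
    fun k M₀ => g_hasDeriv hl hWsm hWb' k M₀
  have hgderiv : ∀ k, deriv (g k) = g (k+1) := by
    intro k
    funext M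
    exact (hDeriv k M).deriv
  have hIter : ∀ k, iteratedDeriv k (g 0) = g k := by
    intro k
    induction k with
    | zero => rw [iteratedDeriv_zero]
    | succ k ih => rw [iteratedDeriv_succ, ih, hgderiv k]
  have hdiffable : ∀ k, Differentiable ℝ (g k) :=
    fun k M => (hDeriv k M).differentiableAt
  have hcd : ∀ n : ℕ, ∀ k, ContDiff ℝ (n : ℕ∞) (g k) := by
    intro n
    induction n with
    | zero => exact fun k => contDiff_zero.2 (hdiffable k).continuous
    | succ n ih =>
      intro k
      have : ContDiff ℝ ((n : WithTop ℕ∞) + 1) (g k) := by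
        rw [contDiff_succ_iff_deriv]
        refine ⟨hdiffable k, ?_, ?_⟩
        · intro h
          exact absurd h (by simp)
        · rw [hgderiv k]
          exact_mod_cast ih (k+1)
      exact_mod_cast this
  constructor
  · rw [hIg]
    exact contDiff_infty.2 fun n => by exact_mod_cast hcd n 0
  · intro k
    obtain ⟨C, hC0, hb⟩ := hWb' k
    refine ⟨(C * Real.sqrt 2 ^ k) * |∫ y in (-1:ℝ)..1, wmaj y|, fun M => ?_⟩
    have hKM : (0:ℝ) ≤ (C * Real.sqrt 2 ^ k) * jap M ^ (max m 0 - (k:ℝ)) := by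
      have := Real.rpow_nonneg (le_of_lt (jap_pos M)) (max m 0 - (k:ℝ))
      positivity
    have h1 : |iteratedDeriv k (Ifun l W) M| = |g k M| := by
      rw [hIg, hIter k]
    have h2 : ‖∫ y in (-1:ℝ)..1, Jint l W k M y‖
        ≤ |∫ y in (-1:ℝ)..1, ((C * Real.sqrt 2 ^ k) * jap M ^ (max m 0 - (k:ℝ))) * wmaj y| := by
      refine intervalIntegral.norm_integral_le_abs_of_norm_le ?_
        (wmaj_intble.const_mul _)
      refine (ae_restrict_iff' measurableSet_uIoc).2 (ae_of_all _ fun y hy => ?_)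
      simpa [Real.norm_eq_abs] using Jint_bound hl k hC0 hb (uIoc_sub hy) M
    have h3 : |∫ y in (-1:ℝ)..1, ((C * Real.sqrt 2 ^ k) * jap M ^ (max m 0 - (k:ℝ))) * wmaj y|
        = ((C * Real.sqrt 2 ^ k) * jap M ^ (max m 0 - (k:ℝ))) * |∫ y in (-1:ℝ)..1, wmaj y| := by
      rw [intervalIntegral.integral_const_mul, abs_mul, abs_of_nonneg hKM]
    rw [h1]
    calc |g k M| ≤ _ := h2
      _ = _ := h3
      _ = ((C * Real.sqrt 2 ^ k) * |∫ y in (-1:ℝ)..1, wmaj y|) * jap M ^ (max m 0 - (k:ℝ)) := by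
          ring
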